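/- arXiv:2007.05749 — 4 statements merged into one kernel-verified Lean document; each statement's English description precedes it below -/
import Mathlib

section
/- Let ψ₀, ψ₁ : (0,∞) → ℝ be C² with ψ₀''(s) < 0, ψ₁''(s) ≤ 0, ψ₁'(s) ≥ 0 for all s > 0, and C₁ ≤ −sψ₀''(s) ≤ C₂ for all s > 0. Let ψ₂(b) ≥ 0 for all b > 0. Define η(θ,b) := −ψ₀'(θ) − ψ₁'(θ)ψ₂(b). Then for all θ > 0 and b > 0, η(θ,b) ≤ −C₁ |ln θ| + C(1 + θ), where C := max(C₁ + C₂, |ψ₀'(1)|). -/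
/-!
The term `ψ₁'(θ) ψ₂(b)` is nonnegative, so only `-ψ₀'` has to be bounded. The two-sided bound
`C₁ ≤ -s ψ₀''(s) ≤ C₂` says that `ψ₀' + C₁ log` is antitone and `ψ₀' + C₂ log` is monotone on
`(0, ∞)`. Comparing with the value at `1` gives `-ψ₀'(θ) ≤ -ψ₀'(1) - C₁ |log θ|` for `θ ≤ 1` and
`-ψ₀'(θ) ≤ -ψ₀'(1) + C₂ log θ` for `θ ≥ 1`; in the second case `log θ ≤ θ` absorbs
`(C₁ + C₂) log θ` into `C θ`.
-/

open Real Set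

theorem antitoneOn_add_mul_log {f f' : ℝ → ℝ} {c : ℝ}
    (hf : ∀ s > (0:ℝ), HasDerivAt f (f' s) s) (hc : ∀ s > (0:ℝ), c ≤ -s * f' s) :
    AntitoneOn (fun s => f s + c * log s) (Ioi 0) := by
  have hderiv : ∀ s > (0:ℝ), HasDerivAt (fun s => f s + c * log s) (f' s + c * s⁻¹) s :=
    fun s hs => (hf s hs).add ((hasDerivAt_log hs.ne').const_mul c)
  apply antitoneOn_of_hasDerivWithinAt_nonpos (convex_Ioi 0)
  · exact fun s hs => (hderiv s hs).continuousAt.continuousWithinAt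
  · rw [interior_Ioi]
    exact fun s hs => (hderiv s hs).hasDerivWithinAt
  · rw [interior_Ioi]
    intro s hs
    have hs : (0:ℝ) < s := hs
    have : c * s⁻¹ ≤ -f' s := by
      rw [← div_eq_mul_inv, div_le_iff₀ hs]
      linarith [hc s hs]
    linarith

theorem monotoneOn_add_mul_log {f f' : ℝ → ℝ} {c : ℝ}
    (hf : ∀ s > (0:ℝ), HasDerivAt f (f' s) s) (hc : ∀ s > (0:ℝ), -s * f' s ≤ c) :
    MonotoneOn (fun s => f s + c * log s) (Ioi 0) := by
  have hanti := antitoneOn_add_mul_log (f := -f) (f' := -f') (c := -c)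
    (fun s hs => (hf s hs).neg) (fun s hs => by simp only [Pi.neg_apply]; linarith [hc s hs])
  intro a ha b hb hab
  have := hanti ha hb hab
  simp only [Pi.neg_apply] at this
  linarith

theorem neg_le_of_le_neg_mul_deriv_le {g g' : ℝ → ℝ} {C₁ C₂ : ℝ}
    (hg : ∀ s > (0:ℝ), HasDerivAt g (g' s) s)
    (hbound : ∀ s > (0:ℝ), C₁ ≤ -s * g' s ∧ -s * g' s ≤ C₂) {θ : ℝ} (hθ : 0 < θ) :
    -g θ ≤ -C₁ * |log θ| + max (C₁ + C₂) |g 1| * (1 + θ) := by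
  set C := max (C₁ + C₂) |g 1|
  have hg1 : -g 1 ≤ C := (neg_le_abs (g 1)).trans (le_max_right _ _)
  have hC : 0 ≤ C := (abs_nonneg _).trans (le_max_right _ _)
  have hone : (1:ℝ) ∈ Ioi 0 := mem_Ioi.mpr one_pos
  rcases le_total 1 θ with h1θ | hθ1
  · have hmono := monotoneOn_add_mul_log hg (fun s hs => (hbound s hs).2) hone hθ h1θ
    have hlog : 0 ≤ log θ := log_nonneg h1θ
    have hlog_le : (C₁ + C₂) * log θ ≤ C * θ :=
      calc (C₁ + C₂) * log θ ≤ C * log θ := mul_le_mul_of_nonneg_right (le_max_left _ _) hlog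
        _ ≤ C * θ := mul_le_mul_of_nonneg_left (log_le_self hθ.le) hC
    simp only [log_one, mul_zero, add_zero] at hmono
    rw [abs_of_nonneg hlog]
    linarith
  · have hanti := antitoneOn_add_mul_log hg (fun s hs => (hbound s hs).1) hθ hone hθ1
    simp only [log_one, mul_zero, add_zero] at hanti
    rw [abs_of_nonpos (log_nonpos hθ.le hθ1)]
    linarith [mul_nonneg hC hθ.le]

theorem stmt7_general (ψ₀' ψ₀'' ψ₁' ψ₂ : ℝ → ℝ) (C₁ C₂ : ℝ)
    (hd02 : ∀ s > (0:ℝ), HasDerivAt ψ₀' (ψ₀'' s) s)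
    (h1mono : ∀ s > (0:ℝ), 0 ≤ ψ₁' s)
    (hψ₂ : ∀ b > (0:ℝ), 0 ≤ ψ₂ b)
    (hbound : ∀ s > (0:ℝ), C₁ ≤ -s * ψ₀'' s ∧ -s * ψ₀'' s ≤ C₂) :
    ∀ θ > (0:ℝ), ∀ b > (0:ℝ),
      -ψ₀' θ - ψ₁' θ * ψ₂ b ≤
        -C₁ * |Real.log θ| + max (C₁ + C₂) |ψ₀' 1| * (1 + θ) := by
  intro θ hθ b hb
  have hcoupling : 0 ≤ ψ₁' θ * ψ₂ b := mul_nonneg (h1mono θ hθ) (hψ₂ b hb)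
  linarith [neg_le_of_le_neg_mul_deriv_le hd02 hbound hθ]

/-- Lemma 2.1 of the paper: the entropy `η(θ,b) = -ψ₀'(θ) - ψ₁'(θ)ψ₂(b)`
satisfies `η(θ,b) ≤ -C₁|log θ| + C(1+θ)` with `C = max (C₁+C₂) |ψ₀'(1)|`. -/
theorem stmt7 (ψ₀ ψ₀' ψ₀'' ψ₁ ψ₁' ψ₁'' ψ₂ : ℝ → ℝ) (C₁ C₂ : ℝ)
    (hC₁ : 0 < C₁) (hC₂ : 0 < C₂)
    (hd01 : ∀ s > (0:ℝ), HasDerivAt ψ₀ (ψ₀' s) s)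
    (hd02 : ∀ s > (0:ℝ), HasDerivAt ψ₀' (ψ₀'' s) s)
    (hd11 : ∀ s > (0:ℝ), HasDerivAt ψ₁ (ψ₁' s) s)
    (hd12 : ∀ s > (0:ℝ), HasDerivAt ψ₁' (ψ₁'' s) s)
    (hc0 : ContinuousOn ψ₀'' (Set.Ioi 0))
    (h0conc : ∀ s > (0:ℝ), ψ₀'' s < 0)
    (h1conc : ∀ s > (0:ℝ), ψ₁'' s ≤ 0)
    (h1mono : ∀ s > (0:ℝ), 0 ≤ ψ₁' s)
    (hψ₂ : ∀ b > (0:ℝ), 0 ≤ ψ₂ b)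
    (hbound : ∀ s > (0:ℝ), C₁ ≤ -s * ψ₀'' s ∧ -s * ψ₀'' s ≤ C₂) :
    ∀ θ > (0:ℝ), ∀ b > (0:ℝ),
      -ψ₀' θ - ψ₁' θ * ψ₂ b ≤
        -C₁ * |Real.log θ| + max (C₁ + C₂) |ψ₀' 1| * (1 + θ) :=
  stmt7_general ψ₀' ψ₀'' ψ₁' ψ₂ C₁ C₂ hd02 h1mono hψ₂ hbound
end

section
/- Let s* > 0 and γ* > 0. For v ∈ ℝ³ and ε > 0, define s_ε(v) := s* v/(ε + |v|) + γ* v. Then for every v ∈ ℝ³, with the convention that the expression is 0 when v = 0, the identity |((|s_ε(v)| − s*)₊ / |s_ε(v)|) s_ε(v) − γ* v|² = [γ*|v| − (γ*|v| − ε s*/(ε + |v|))₊]² holds, and consequently, for any δ > 0, this quantity is bounded above by γ*²δ² whenever |v| ≤ δ, and by (ε s*/(ε + δ))² ≤ (s*/(1 + δ/ε))² whenever |v| > δ. -/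
/-- The mollified stick-slip operator `s_ε(v) = s* v/(ε+|v|) + γ* v`. -/
noncomputable def sEps (sstar γstar ε : ℝ) (v : EuclideanSpace ℝ (Fin 3)) :
    EuclideanSpace ℝ (Fin 3) :=
  (sstar / (ε + ‖v‖) + γstar) • v

/-- The key identity and bounds for the mollified stick-slip boundary operator:
with the Lean convention `0/0 = 0` (which makes the expression `0` when `v = 0`),
`|((|s_ε(v)|-s*)₊/|s_ε(v)|) s_ε(v) - γ* v|² = [γ*|v| - (γ*|v| - εs*/(ε+|v|))₊]²`,
and the quantity is `≤ γ*²δ²` when `|v| ≤ δ` and `≤ (s*/(1+δ/ε))²` when `|v| > δ`. -/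
theorem stmt14 (sstar γstar ε δ : ℝ) (hs : 0 < sstar) (hγ : 0 < γstar)
    (hε : 0 < ε) (hδ : 0 < δ) (v : EuclideanSpace ℝ (Fin 3)) :
    (‖(max (‖sEps sstar γstar ε v‖ - sstar) 0 / ‖sEps sstar γstar ε v‖) •
          sEps sstar γstar ε v - γstar • v‖ ^ 2
        = (γstar * ‖v‖ -
            max (γstar * ‖v‖ - ε * sstar / (ε + ‖v‖)) 0) ^ 2) ∧
    (‖v‖ ≤ δ →
      ‖(max (‖sEps sstar γstar ε v‖ - sstar) 0 / ‖sEps sstar γstar ε v‖) •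
          sEps sstar γstar ε v - γstar • v‖ ^ 2 ≤ γstar ^ 2 * δ ^ 2) ∧
    (δ < ‖v‖ →
      ‖(max (‖sEps sstar γstar ε v‖ - sstar) 0 / ‖sEps sstar γstar ε v‖) •
          sEps sstar γstar ε v - γstar • v‖ ^ 2 ≤ (sstar / (1 + δ / ε)) ^ 2) := by
  set r := ‖v‖ with hr
  have hr0 : 0 ≤ r := norm_nonneg v
  have hεr : 0 < ε + r := by positivity
  set c : ℝ := sstar / (ε + r) + γstar with hc
  have hc0 : 0 < c := by positivity
  have hse : sEps sstar γstar ε v = c • v := rfl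
  have hnorm : ‖sEps sstar γstar ε v‖ = c * r := by
    rw [hse, norm_smul, Real.norm_eq_abs, abs_of_pos hc0]
  set X : ℝ := ε * sstar / (ε + r) with hX
  have hX0 : 0 < X := by positivity
  have hkey : c * r - sstar = γstar * r - X := by
    rw [hc, hX]
    field_simp
    ring
  -- the identity
  have hId : ‖(max (‖sEps sstar γstar ε v‖ - sstar) 0 / ‖sEps sstar γstar ε v‖) •
          sEps sstar γstar ε v - γstar • v‖ ^ 2
        = (γstar * r - max (γstar * r - X) 0) ^ 2 := by
    rcases eq_or_ne v 0 with h0 | h0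
    · subst h0
      have hr' : r = 0 := by simp [hr]
      rw [hse]
      simp [hr']
      rw [max_eq_right (neg_nonpos.mpr hX0.le)]
      norm_num
    · have hrpos : 0 < r := norm_pos_iff.mpr h0
      rw [hnorm, hse, smul_smul, ← sub_smul, norm_smul, Real.norm_eq_abs, ← hr,
        mul_pow, sq_abs]
      have h1 : max (c * r - sstar) 0 / (c * r) * c = max (c * r - sstar) 0 / r := by
        field_simp
      rw [h1, hkey]
      have : (max (γstar * r - X) 0 / r - γstar) ^ 2 * r ^ 2
          = (max (γstar * r - X) 0 - γstar * r) ^ 2 := by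
        field_simp
      rw [this]
      ring
  set A : ℝ := γstar * r - max (γstar * r - X) 0 with hA
  have hA0 : 0 ≤ A := by
    have : max (γstar * r - X) 0 ≤ γstar * r := by
      apply max_le
      · nlinarith
      · positivity
    simpa [hA] using sub_nonneg.mpr this
  have hAr : A ≤ γstar * r := sub_le_self _ (le_max_right _ _)
  have hAX : A ≤ X := by
    have h := le_max_left (γstar * r - X) 0
    simp only [hA]; linarith
  refine ⟨hId, ?_, ?_⟩
  · intro hrd
    rw [hId]
    have h1 : A ≤ γstar * δ := le_trans hAr (by nlinarith)
    have := pow_le_pow_left₀ hA0 h1 2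
    calc A ^ 2 ≤ (γstar * δ) ^ 2 := this
      _ = γstar ^ 2 * δ ^ 2 := by ring
  · intro hrd
    rw [hId]
    have hbd : X ≤ sstar / (1 + δ / ε) := by
      have heq : sstar / (1 + δ / ε) = ε * sstar / (ε + δ) := by
        field_simp
      rw [heq, hX]
      apply div_le_div_of_nonneg_left (by positivity) (by positivity)
      linarith
    have h1 : A ≤ sstar / (1 + δ / ε) := le_trans hAX hbd
    exact pow_le_pow_left₀ hA0 h1 2
end

section
/- Let ν : ℝ → ℝ be measurable with C₁ ≤ ν(t) ≤ C₂ for constants 0 < C₁ ≤ C₂, let (Dₙ) be a sequence in L²(Q; ℝ^{3×3}) converging weakly to D, and let (νₙ) be measurable functions with C₁ ≤ νₙ ≤ C₂ converging almost everywhere to ν∞ on the finite measure space Q. If limsupₙ ∫_Q νₙ |Dₙ|² ≤ ∫_Q ν∞ |D|², then Dₙ → D strongly in L²(Q; ℝ^{3×3}) and νₙ|Dₙ|² → ν∞|D|² strongly in L¹(Q). -/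
/-
Expand `∫ νₙ‖Dₙ - D‖² = ∫ νₙ‖Dₙ‖² - 2 ∫ ⟪Dₙ, νₙ D⟫ + ∫ ⟪D, νₙ D⟫`. By dominated convergence
`νₙ D → ν∞ D` strongly in `L²`, and a weakly convergent sequence is bounded, so both inner-product
terms tend to `∫ ν∞‖D‖²` (weak-strong convergence). The left side is nonnegative, so
`liminf ∫ νₙ‖Dₙ‖² ≥ ∫ ν∞‖D‖²`; with the `limsup` hypothesis the energies converge and the weighted
defect tends to `0`, which controls `C₁ ∫ ‖Dₙ - D‖²`. The `L¹` convergence of the energy densities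
then follows from the pointwise bound
`|a‖u‖² - b‖v‖²| ≤ C (‖u - v‖² + 2‖v‖‖u - v‖) + ‖v‖‖a v - b v‖` for `|a| ≤ C` and Cauchy–Schwarz.
-/

open MeasureTheory Filter
open scoped InnerProductSpace Topology

theorem Filter.tendsto_of_le_of_limsup_le {α β : Type*} [ConditionallyCompleteLinearOrder α]
    [TopologicalSpace α] [OrderTopology α] {l : Filter β} [l.NeBot] {u v : β → α} {a : α}
    (hv : Tendsto v l (𝓝 a)) (hvu : ∀ᶠ n in l, v n ≤ u n)
    (hbdd : IsBoundedUnder (· ≤ ·) l u) (hu : limsup u l ≤ a) : Tendsto u l (𝓝 a) :=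
  tendsto_of_le_liminf_of_limsup_le
    (hv.liminf_eq ▸ liminf_le_liminf hvu hv.isBoundedUnder_ge hbdd.isCoboundedUnder_ge) hu hbdd
    (hv.isBoundedUnder_ge.mono_ge hvu)

namespace MeasureTheory

variable {Q : Type*} [MeasurableSpace Q] {μ : Measure Q} {E F : Type*} [NormedAddCommGroup E]
  [NormedAddCommGroup F]

theorem integral_norm_mul_norm_le {f : Q → E} {g : Q → F} (hf : MemLp f 2 μ) (hg : MemLp g 2 μ) :
    ∫ x, ‖f x‖ * ‖g x‖ ∂μ ≤ √(∫ x, ‖f x‖ ^ 2 ∂μ) * √(∫ x, ‖g x‖ ^ 2 ∂μ) := by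
  have h2 : ENNReal.ofReal 2 = 2 := by norm_num
  have := integral_mul_norm_le_Lp_mul_Lq (μ := μ) Real.HolderConjugate.two_two
    (h2 ▸ hf.norm) (h2 ▸ hg.norm)
  simp only [norm_norm, Real.rpow_two] at this
  rwa [← Real.sqrt_eq_rpow, ← Real.sqrt_eq_rpow] at this

theorem MemLp.integrable_norm_mul_norm {f : Q → E} {g : Q → F} (hf : MemLp f 2 μ)
    (hg : MemLp g 2 μ) :
    Integrable (fun x => ‖f x‖ * ‖g x‖) μ :=
  hf.norm.integrable_mul hg.norm

theorem MemLp.integrable_inner [InnerProductSpace ℝ E] {f g : Q → E} (hf : MemLp f 2 μ)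
    (hg : MemLp g 2 μ) :
    Integrable (fun x => ⟪f x, g x⟫_ℝ) μ :=
  (hf.integrable_norm_mul_norm hg).mono' (hf.1.inner hg.1)
    (ae_of_all _ fun x => abs_real_inner_le_norm (f x) (g x))

theorem MemLp.smul_of_abs_le [NormedSpace ℝ E] {w : Q → ℝ} {g : Q → E} {C : ℝ}
    (hg : MemLp g 2 μ) (hw : AEStronglyMeasurable w μ) (hwC : ∀ᵐ x ∂μ, |w x| ≤ C) :
    MemLp (fun x => w x • g x) 2 μ :=
  hg.of_le_mul (hw.smul hg.1) <| hwC.mono fun x hx => by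
    rw [norm_smul, Real.norm_eq_abs]
    exact mul_le_mul_of_nonneg_right hx (norm_nonneg _)

theorem tendsto_integral_norm_mul_norm_of_bounded {f : ℕ → Q → E} {g : ℕ → Q → F} {M : ℝ}
    (hf : ∀ n, MemLp (f n) 2 μ) (hM : ∀ n, ∫ x, ‖f n x‖ ^ 2 ∂μ ≤ M)
    (hg : ∀ n, MemLp (g n) 2 μ) (hg0 : Tendsto (fun n => ∫ x, ‖g n x‖ ^ 2 ∂μ) atTop (𝓝 0)) :
    Tendsto (fun n => ∫ x, ‖f n x‖ * ‖g n x‖ ∂μ) atTop (𝓝 0) := by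
  refine squeeze_zero (fun n => integral_nonneg fun x => by positivity)
    (fun n => (integral_norm_mul_norm_le (hf n) (hg n)).trans
      (mul_le_mul_of_nonneg_right (Real.sqrt_le_sqrt (hM n)) (Real.sqrt_nonneg _))) ?_
  simpa using hg0.sqrt.const_mul √M

section Weak

variable [InnerProductSpace ℝ E]

def TendstoWeaklyL2 (μ : Measure Q) (f : ℕ → Q → E) (flim : Q → E) : Prop :=
  ∀ φ : Q → E, MemLp φ 2 μ →
    Tendsto (fun n => ∫ x, ⟪f n x, φ x⟫_ℝ ∂μ) atTop (𝓝 (∫ x, ⟪flim x, φ x⟫_ℝ ∂μ))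

theorem tendstoWeaklyL2_const (f : Q → E) : TendstoWeaklyL2 μ (fun _ => f) f :=
  fun _ _ => tendsto_const_nhds

theorem MemLp.inner_toLp {f : Q → E} (hf : MemLp f 2 μ) (φ : Lp E 2 μ) :
    ⟪hf.toLp f, φ⟫_ℝ = ∫ x, ⟪f x, φ x⟫_ℝ ∂μ :=
  (L2.inner_def _ _).trans <| integral_congr_ae <| by
    filter_upwards [hf.coeFn_toLp] with x hx
    rw [hx]

namespace TendstoWeaklyL2

variable {f : ℕ → Q → E} {flim : Q → E}

-- Banach–Steinhaus applied to the functionals `⟪f n, ·⟫` on `Lp E 2 μ`.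
theorem exists_integral_norm_sq_le [CompleteSpace E] (hw : TendstoWeaklyL2 μ f flim)
    (hf : ∀ n, MemLp (f n) 2 μ) : ∃ M, ∀ n, ∫ x, ‖f n x‖ ^ 2 ∂μ ≤ M := by
  obtain ⟨C, hC⟩ := banach_steinhaus (g := fun n => innerSL ℝ ((hf n).toLp (f n))) fun φ => by
    obtain ⟨C, hC⟩ := (hw φ (Lp.memLp φ)).norm.bddAbove_range
    exact ⟨C, fun n => by simpa [(hf n).inner_toLp] using hC (Set.mem_range_self n)⟩
  refine ⟨C ^ 2, fun n => ?_⟩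
  have hnorm : ∫ x, ‖f n x‖ ^ 2 ∂μ = ‖(hf n).toLp (f n)‖ ^ 2 := by
    rw [← real_inner_self_eq_norm_sq, (hf n).inner_toLp]
    refine integral_congr_ae ?_
    filter_upwards [(hf n).coeFn_toLp] with x hx
    rw [hx, real_inner_self_eq_norm_sq]
  rw [hnorm]
  exact pow_le_pow_left₀ (norm_nonneg _) (by simpa using hC n) 2

theorem tendsto_integral_inner [CompleteSpace E] (hw : TendstoWeaklyL2 μ f flim)
    (hf : ∀ n, MemLp (f n) 2 μ) {g : ℕ → Q → E} {glim : Q → E} (hg : ∀ n, MemLp (g n) 2 μ)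
    (hglim : MemLp glim 2 μ)
    (hstrong : Tendsto (fun n => ∫ x, ‖g n x - glim x‖ ^ 2 ∂μ) atTop (𝓝 0)) :
    Tendsto (fun n => ∫ x, ⟪f n x, g n x⟫_ℝ ∂μ) atTop (𝓝 (∫ x, ⟪flim x, glim x⟫_ℝ ∂μ)) := by
  obtain ⟨M, hM⟩ := hw.exists_integral_norm_sq_le hf
  have hdiff : ∀ n, MemLp (fun x => g n x - glim x) 2 μ := fun n => (hg n).sub hglim
  have hsplit : ∀ n, ∫ x, ⟪f n x, g n x⟫_ℝ ∂μ =
      ∫ x, ⟪f n x, glim x⟫_ℝ ∂μ + ∫ x, ⟪f n x, g n x - glim x⟫_ℝ ∂μ := fun n => by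
    rw [← integral_add ((hf n).integrable_inner hglim) ((hf n).integrable_inner (hdiff n))]
    simp only [inner_sub_right, add_sub_cancel]
  have herr : Tendsto (fun n => ∫ x, ⟪f n x, g n x - glim x⟫_ℝ ∂μ) atTop (𝓝 0) :=
    squeeze_zero_norm (fun n => norm_integral_le_of_norm_le
        ((hf n).integrable_norm_mul_norm (hdiff n))
        (ae_of_all _ fun x => norm_inner_le_norm _ _))
      (tendsto_integral_norm_mul_norm_of_bounded hf hM hdiff hstrong)
  simpa only [hsplit, add_zero] using (hw glim hglim).add herr

end TendstoWeaklyL2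

end Weak

theorem abs_mul_norm_sq_sub_mul_norm_sq_le [NormedSpace ℝ E] {a b C : ℝ} (u v : E)
    (ha : |a| ≤ C) :
    |a * ‖u‖ ^ 2 - b * ‖v‖ ^ 2| ≤
      C * (‖u - v‖ ^ 2 + 2 * (‖v‖ * ‖u - v‖)) + ‖v‖ * ‖a • v - b • v‖ := by
  have hnorm : |‖u‖ ^ 2 - ‖v‖ ^ 2| ≤ ‖u - v‖ ^ 2 + 2 * (‖v‖ * ‖u - v‖) := by
    have h := abs_norm_sub_norm_le u v
    rw [abs_le] at h ⊢
    constructor <;> nlinarith [norm_nonneg u, norm_nonneg v, norm_nonneg (u - v)]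
  rw [← sub_smul, norm_smul, Real.norm_eq_abs]
  calc |a * ‖u‖ ^ 2 - b * ‖v‖ ^ 2|
      = |a * (‖u‖ ^ 2 - ‖v‖ ^ 2) + (a - b) * ‖v‖ ^ 2| := by ring_nf
    _ ≤ |a| * |‖u‖ ^ 2 - ‖v‖ ^ 2| + |a - b| * ‖v‖ ^ 2 := by
      refine (abs_add_le _ _).trans_eq ?_
      rw [abs_mul, abs_mul, abs_of_nonneg (by positivity : (0 : ℝ) ≤ ‖v‖ ^ 2)]
    _ ≤ C * (‖u - v‖ ^ 2 + 2 * (‖v‖ * ‖u - v‖)) + |a - b| * ‖v‖ ^ 2 := by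
      have := (abs_nonneg a).trans ha
      gcongr
    _ = C * (‖u - v‖ ^ 2 + 2 * (‖v‖ * ‖u - v‖)) + ‖v‖ * (|a - b| * ‖v‖) := by ring

theorem integral_mul_norm_sq_le {w : Q → ℝ} {C : ℝ} {f : Q → E} (hw : AEStronglyMeasurable w μ)
    (hwC : ∀ᵐ x ∂μ, |w x| ≤ C) (hf : MemLp f 2 μ) :
    ∫ x, w x * ‖f x‖ ^ 2 ∂μ ≤ C * ∫ x, ‖f x‖ ^ 2 ∂μ := by
  rw [← integral_const_mul]
  exact integral_mono_ae (hf.norm.integrable_sq.bdd_mul hw hwC)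
    (hf.norm.integrable_sq.const_mul C)
    (hwC.mono fun x hx => mul_le_mul_of_nonneg_right ((le_abs_self _).trans hx) (sq_nonneg _))

theorem integral_mul_norm_sub_sq [InnerProductSpace ℝ E] {w : Q → ℝ} {C : ℝ} {f g : Q → E}
    (hw : AEStronglyMeasurable w μ) (hwC : ∀ᵐ x ∂μ, |w x| ≤ C) (hf : MemLp f 2 μ)
    (hg : MemLp g 2 μ) :
    ∫ x, w x * ‖f x - g x‖ ^ 2 ∂μ =
      ∫ x, w x * ‖f x‖ ^ 2 ∂μ - 2 * ∫ x, ⟪f x, w x • g x⟫_ℝ ∂μ +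
        ∫ x, ⟪g x, w x • g x⟫_ℝ ∂μ := by
  have hwg := hg.smul_of_abs_le hw hwC
  rw [← integral_const_mul, ← integral_sub (hf.norm.integrable_sq.bdd_mul hw hwC)
    ((hf.integrable_inner hwg).const_mul 2), ← integral_add _ (hg.integrable_inner hwg)]
  · refine integral_congr_ae (ae_of_all _ fun x => ?_)
    simp only [real_inner_smul_right, real_inner_self_eq_norm_sq, norm_sub_sq_real]
    ring
  · exact (hf.norm.integrable_sq.bdd_mul hw hwC).sub ((hf.integrable_inner hwg).const_mul 2)

section BoundedWeights

variable {w : ℕ → Q → ℝ} {wlim : Q → ℝ} {C : ℝ}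

theorem ae_abs_le_of_tendsto (hwC : ∀ n, ∀ᵐ x ∂μ, |w n x| ≤ C)
    (hlim : ∀ᵐ x ∂μ, Tendsto (fun n => w n x) atTop (𝓝 (wlim x))) :
    ∀ᵐ x ∂μ, |wlim x| ≤ C := by
  filter_upwards [hlim, ae_all_iff.2 hwC] with x hx hxC
  exact le_of_tendsto' hx.abs hxC

theorem tendsto_integral_norm_smul_sub_smul_sq [NormedSpace ℝ E] {g : Q → E}
    (hw : ∀ n, AEStronglyMeasurable (w n) μ) (hwC : ∀ n, ∀ᵐ x ∂μ, |w n x| ≤ C)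
    (hlim : ∀ᵐ x ∂μ, Tendsto (fun n => w n x) atTop (𝓝 (wlim x))) (hg : MemLp g 2 μ) :
    Tendsto (fun n => ∫ x, ‖w n x • g x - wlim x • g x‖ ^ 2 ∂μ) atTop (𝓝 0) := by
  have hwlim : AEStronglyMeasurable wlim μ := aestronglyMeasurable_of_tendsto_ae _ hw hlim
  have hwlimC := ae_abs_le_of_tendsto hwC hlim
  have hbound : ∀ n, ∀ᵐ x ∂μ, ‖‖w n x • g x - wlim x • g x‖ ^ 2‖ ≤ (2 * C) ^ 2 * ‖g x‖ ^ 2 := by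
    intro n
    filter_upwards [hwC n, hwlimC] with x hx hxlim
    rw [← sub_smul, norm_pow, norm_norm, norm_smul, Real.norm_eq_abs, mul_pow]
    have : |w n x - wlim x| ≤ 2 * C := (abs_sub _ _).trans (by linarith)
    gcongr
  have hpointwise : ∀ᵐ x ∂μ,
      Tendsto (fun n => ‖w n x • g x - wlim x • g x‖ ^ 2) atTop (𝓝 0) := by
    filter_upwards [hlim] with x hx
    simpa using ((hx.smul_const (g x)).sub_const (wlim x • g x)).norm.pow 2
  simpa using tendsto_integral_of_dominated_convergence _
    (fun n => (((hw n).smul hg.1).sub (hwlim.smul hg.1)).norm.pow 2)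
    (hg.norm.integrable_sq.const_mul _) hbound hpointwise

theorem tendsto_integral_abs_mul_norm_sq_sub [NormedSpace ℝ E] {f : ℕ → Q → E} {flim : Q → E}
    (hw : ∀ n, AEStronglyMeasurable (w n) μ) (hwC : ∀ n, ∀ᵐ x ∂μ, |w n x| ≤ C)
    (hlim : ∀ᵐ x ∂μ, Tendsto (fun n => w n x) atTop (𝓝 (wlim x)))
    (hf : ∀ n, MemLp (f n) 2 μ) (hflim : MemLp flim 2 μ)
    (hstrong : Tendsto (fun n => ∫ x, ‖f n x - flim x‖ ^ 2 ∂μ) atTop (𝓝 0)) :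
    Tendsto (fun n => ∫ x, |w n x * ‖f n x‖ ^ 2 - wlim x * ‖flim x‖ ^ 2| ∂μ) atTop (𝓝 0) := by
  have hwlim : AEStronglyMeasurable wlim μ := aestronglyMeasurable_of_tendsto_ae _ hw hlim
  have hdiff : ∀ n, MemLp (fun x => f n x - flim x) 2 μ := fun n => (hf n).sub hflim
  have hwdiff : ∀ n, MemLp (fun x => w n x • flim x - wlim x • flim x) 2 μ := fun n =>
    (hflim.smul_of_abs_le (hw n) (hwC n)).sub
      (hflim.smul_of_abs_le hwlim (ae_abs_le_of_tendsto hwC hlim))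
  have hcross := tendsto_integral_norm_mul_norm_of_bounded (fun _ => hflim) (fun _ => le_rfl)
    hdiff hstrong
  have hweight := tendsto_integral_norm_mul_norm_of_bounded (fun _ => hflim) (fun _ => le_rfl)
    hwdiff (tendsto_integral_norm_smul_sub_smul_sq hw hwC hlim hflim)
  have hle : ∀ n, ∫ x, |w n x * ‖f n x‖ ^ 2 - wlim x * ‖flim x‖ ^ 2| ∂μ ≤
      C * (∫ x, ‖f n x - flim x‖ ^ 2 ∂μ + 2 * ∫ x, ‖flim x‖ * ‖f n x - flim x‖ ∂μ) +
        ∫ x, ‖flim x‖ * ‖w n x • flim x - wlim x • flim x‖ ∂μ := by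
    intro n
    have hcross_int := hflim.integrable_norm_mul_norm (hdiff n)
    have hquad_int : Integrable
        (fun x => C * (‖f n x - flim x‖ ^ 2 + 2 * (‖flim x‖ * ‖f n x - flim x‖))) μ :=
      ((hdiff n).norm.integrable_sq.add (hcross_int.const_mul 2)).const_mul C
    calc ∫ x, |w n x * ‖f n x‖ ^ 2 - wlim x * ‖flim x‖ ^ 2| ∂μ
        ≤ ∫ x, C * (‖f n x - flim x‖ ^ 2 + 2 * (‖flim x‖ * ‖f n x - flim x‖)) +
            ‖flim x‖ * ‖w n x • flim x - wlim x • flim x‖ ∂μ :=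
          integral_mono_of_nonneg (ae_of_all _ fun x => abs_nonneg _)
            (hquad_int.add (hflim.integrable_norm_mul_norm (hwdiff n)))
            ((hwC n).mono fun x hx => abs_mul_norm_sq_sub_mul_norm_sq_le _ _ hx)
      _ = _ := by
          rw [integral_add hquad_int (hflim.integrable_norm_mul_norm (hwdiff n)),
            integral_const_mul, integral_add (hdiff n).norm.integrable_sq
            (hcross_int.const_mul 2), integral_const_mul]
  refine squeeze_zero (fun n => integral_nonneg fun x => abs_nonneg _) hle ?_
  simpa using ((hstrong.add (hcross.const_mul 2)).const_mul C).add hweight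

theorem tendsto_integral_norm_sq_of_tendsto_integral_mul {g : ℕ → Q → E} {c : ℝ} (hc : 0 < c)
    (hw : ∀ n, AEStronglyMeasurable (w n) μ) (hcw : ∀ n, ∀ᵐ x ∂μ, c ≤ w n x)
    (hwC : ∀ n, ∀ᵐ x ∂μ, |w n x| ≤ C) (hg : ∀ n, MemLp (g n) 2 μ)
    (h : Tendsto (fun n => ∫ x, w n x * ‖g n x‖ ^ 2 ∂μ) atTop (𝓝 0)) :
    Tendsto (fun n => ∫ x, ‖g n x‖ ^ 2 ∂μ) atTop (𝓝 0) := by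
  refine squeeze_zero (fun n => integral_nonneg fun x => sq_nonneg _) (fun n => ?_)
    (by simpa using h.div_const c)
  rw [le_div_iff₀ hc, mul_comm, ← integral_const_mul]
  exact integral_mono_of_nonneg (ae_of_all _ fun x => by positivity)
    ((hg n).norm.integrable_sq.bdd_mul (hw n) (hwC n))
    ((hcw n).mono fun x hx => mul_le_mul_of_nonneg_right hx (sq_nonneg _))

theorem tendsto_integral_mul_norm_sub_sq_of_limsup_le [InnerProductSpace ℝ E] [CompleteSpace E]
    {f : ℕ → Q → E} {flim : Q → E} (hw : ∀ n, AEStronglyMeasurable (w n) μ)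
    (hw0 : ∀ n, ∀ᵐ x ∂μ, 0 ≤ w n x) (hwC : ∀ n, ∀ᵐ x ∂μ, |w n x| ≤ C)
    (hlim : ∀ᵐ x ∂μ, Tendsto (fun n => w n x) atTop (𝓝 (wlim x)))
    (hweak : TendstoWeaklyL2 μ f flim) (hf : ∀ n, MemLp (f n) 2 μ) (hflim : MemLp flim 2 μ)
    (hlimsup : limsup (fun n => ∫ x, w n x * ‖f n x‖ ^ 2 ∂μ) atTop ≤
      ∫ x, wlim x * ‖flim x‖ ^ 2 ∂μ) :
    Tendsto (fun n => ∫ x, w n x * ‖f n x - flim x‖ ^ 2 ∂μ) atTop (𝓝 0) := by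
  have hwlim := aestronglyMeasurable_of_tendsto_ae _ hw hlim
  have hwf := fun n => hflim.smul_of_abs_le (hw n) (hwC n)
  have hwflim := hflim.smul_of_abs_le hwlim (ae_abs_le_of_tendsto hwC hlim)
  have hstrong := tendsto_integral_norm_smul_sub_smul_sq hw hwC hlim hflim
  have hlimit : ∫ x, ⟪flim x, wlim x • flim x⟫_ℝ ∂μ = ∫ x, wlim x * ‖flim x‖ ^ 2 ∂μ := by
    simp only [real_inner_smul_right, real_inner_self_eq_norm_sq]
  have hcross := hweak.tendsto_integral_inner hf hwf hwflim hstrong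
  have hweight := (tendstoWeaklyL2_const flim).tendsto_integral_inner (fun _ => hflim) hwf
    hwflim hstrong
  rw [hlimit] at hcross hweight
  have hexpand := fun n => integral_mul_norm_sub_sq (hw n) (hwC n) (hf n) hflim
  have hdefect_nonneg : ∀ n, 0 ≤ ∫ x, w n x * ‖f n x - flim x‖ ^ 2 ∂μ := fun n =>
    integral_nonneg_of_ae <| (hw0 n).mono fun x hx => mul_nonneg hx (sq_nonneg _)
  obtain ⟨M, hM⟩ := hweak.exists_integral_norm_sq_le hf
  have hbdd : ∀ n, ∫ x, w n x * ‖f n x‖ ^ 2 ∂μ ≤ |C| * M := fun n =>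
    (integral_mul_norm_sq_le (hw n) (hwC n) (hf n)).trans <|
      mul_le_mul (le_abs_self C) (hM n) (integral_nonneg fun x => sq_nonneg _) (abs_nonneg C)
  have henergy : Tendsto (fun n => ∫ x, w n x * ‖f n x‖ ^ 2 ∂μ) atTop
      (𝓝 (∫ x, wlim x * ‖flim x‖ ^ 2 ∂μ)) :=
    tendsto_of_le_of_limsup_le (by simpa [two_mul] using (hcross.const_mul 2).sub hweight)
      (Eventually.of_forall fun n => by linarith [hexpand n, hdefect_nonneg n])
      (isBoundedUnder_of ⟨_, hbdd⟩) hlimsup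
  simpa [hexpand, two_mul] using (henergy.sub (hcross.const_mul 2)).add hweight

end BoundedWeights

end MeasureTheory

theorem stmt16_general {Q : Type*} [MeasurableSpace Q] (μ : Measure Q)
    (C₁ C₂ : ℝ) (hC₁ : 0 < C₁)
    (D : ℕ → Q → EuclideanSpace ℝ (Fin 3 × Fin 3))
    (Dlim : Q → EuclideanSpace ℝ (Fin 3 × Fin 3))
    (hD : ∀ n, MemLp (D n) 2 μ) (hDlim : MemLp Dlim 2 μ)
    (hweak : ∀ φ : Q → EuclideanSpace ℝ (Fin 3 × Fin 3), MemLp φ 2 μ →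
      Tendsto (fun n => ∫ x, (inner ℝ (D n x) (φ x) : ℝ) ∂μ) atTop
        (nhds (∫ x, (inner ℝ (Dlim x) (φ x) : ℝ) ∂μ)))
    (ν : ℕ → Q → ℝ) (νlim : Q → ℝ)
    (hνmeas : ∀ n, Measurable (ν n))
    (hνbound : ∀ n x, C₁ ≤ ν n x ∧ ν n x ≤ C₂)
    (hνae : ∀ᵐ x ∂μ, Tendsto (fun n => ν n x) atTop (nhds (νlim x)))
    (hlimsup : limsup (fun n => ∫ x, ν n x * ‖D n x‖ ^ 2 ∂μ) atTop ≤
      ∫ x, νlim x * ‖Dlim x‖ ^ 2 ∂μ) :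
    Tendsto (fun n => ∫ x, ‖D n x - Dlim x‖ ^ 2 ∂μ) atTop (nhds 0) ∧
    Tendsto (fun n => ∫ x, |ν n x * ‖D n x‖ ^ 2 - νlim x * ‖Dlim x‖ ^ 2| ∂μ)
      atTop (nhds 0) := by
  have hν : ∀ n, AEStronglyMeasurable (ν n) μ := fun n => (hνmeas n).aestronglyMeasurable
  have hC₁ν : ∀ n, ∀ᵐ x ∂μ, C₁ ≤ ν n x := fun n => ae_of_all _ fun x => (hνbound n x).1
  have hνC₂ : ∀ n, ∀ᵐ x ∂μ, |ν n x| ≤ C₂ := fun n =>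
    ae_of_all _ fun x => abs_le.2 ⟨by linarith [hνbound n x], (hνbound n x).2⟩
  have hdefect := tendsto_integral_mul_norm_sub_sq_of_limsup_le hν
    (fun n => (hC₁ν n).mono fun x hx => hC₁.le.trans hx) hνC₂ hνae hweak hD hDlim hlimsup
  have hL2 := tendsto_integral_norm_sq_of_tendsto_integral_mul hC₁ hν hC₁ν hνC₂
    (fun n => (hD n).sub hDlim) hdefect
  exact ⟨hL2, tendsto_integral_abs_mul_norm_sq_sub hν hνC₂ hνae hD hDlim hL2⟩

/-- Strong convergence of the velocity gradients: if `Dₙ ⇀ D` weakly in `L²`,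
the viscosities `νₙ` satisfy uniform two-sided bounds `C₁ ≤ νₙ ≤ C₂` and
converge a.e. to `ν∞`, and `limsupₙ ∫ νₙ|Dₙ|² ≤ ∫ ν∞|D|²`, then `Dₙ → D`
strongly in `L²` and `νₙ|Dₙ|² → ν∞|D|²` strongly in `L¹`. -/
theorem stmt16 {Q : Type*} [MeasurableSpace Q] (μ : Measure Q) [IsFiniteMeasure μ]
    (C₁ C₂ : ℝ) (hC₁ : 0 < C₁) (hC₁₂ : C₁ ≤ C₂)
    (D : ℕ → Q → EuclideanSpace ℝ (Fin 3 × Fin 3))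
    (Dlim : Q → EuclideanSpace ℝ (Fin 3 × Fin 3))
    (hD : ∀ n, MemLp (D n) 2 μ) (hDlim : MemLp Dlim 2 μ)
    (hweak : ∀ φ : Q → EuclideanSpace ℝ (Fin 3 × Fin 3), MemLp φ 2 μ →
      Tendsto (fun n => ∫ x, (inner ℝ (D n x) (φ x) : ℝ) ∂μ) atTop
        (nhds (∫ x, (inner ℝ (Dlim x) (φ x) : ℝ) ∂μ)))
    (ν : ℕ → Q → ℝ) (νlim : Q → ℝ)
    (hνmeas : ∀ n, Measurable (ν n))
    (hνbound : ∀ n x, C₁ ≤ ν n x ∧ ν n x ≤ C₂)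
    (hνae : ∀ᵐ x ∂μ, Tendsto (fun n => ν n x) atTop (nhds (νlim x)))
    (hlimsup : limsup (fun n => ∫ x, ν n x * ‖D n x‖ ^ 2 ∂μ) atTop ≤
      ∫ x, νlim x * ‖Dlim x‖ ^ 2 ∂μ) :
    Tendsto (fun n => ∫ x, ‖D n x - Dlim x‖ ^ 2 ∂μ) atTop (nhds 0) ∧
    Tendsto (fun n => ∫ x, |ν n x * ‖D n x‖ ^ 2 - νlim x * ‖Dlim x‖ ^ 2| ∂μ)
      atTop (nhds 0) :=
  stmt16_general μ C₁ C₂ hC₁ D Dlim hD hDlim hweak ν νlim hνmeas hνbound hνae hlimsup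
end

section
/- Let f, g : ℝ₊ → ℝ₊ with f nondecreasing, and let θₙ, θ be nonnegative measurable functions on a finite measure space Q such that θₙ → θ a.e., f is continuous, and |fₙ(s) − f(s)| ≤ M·χ_{s < εₙ} for a sequence εₙ → 0 and a constant M (i.e., fₙ agrees with f for arguments ≥ εₙ and the discrepancy is uniformly bounded). If moreover μ({θₙ < εₙ}) → 0, then ∫_Q |fₙ(θₙ) − f(θ)| dμ → 0 provided f is bounded on bounded sets and the family f(θₙ) is uniformly integrable. -/
open MeasureTheory Filter
open scoped Topology

/-! Since `f` is continuous, `f(θₙ) → f(θ)` a.e.; by Fatou the limit `f(θ)` is integrable, and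
Vitali's convergence theorem turns uniform integrability into `∫ |f(θₙ) - f(θ)| → 0`. The
regularized values `fₙ(θₙ)` differ from `f(θₙ)` by at most `M`, and only on `{θₙ < εₙ}`, whose
measure tends to zero. -/

namespace MeasureTheory

variable {α β : Type*} [MeasurableSpace α] {μ : Measure α} [NormedAddCommGroup β]

theorem integral_norm_sub_eq_toReal_eLpNorm {f g : α → β}
    (hfg : AEStronglyMeasurable (f - g) μ) :
    ∫ x, ‖f x - g x‖ ∂μ = (eLpNorm (f - g) 1 μ).toReal := by
  rw [eLpNorm_one_eq_lintegral_enorm, ← integral_norm_eq_lintegral_enorm hfg]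
  rfl

theorem UniformIntegrable.tendsto_integral_norm_sub_of_ae_tendsto [IsFiniteMeasure μ]
    {f : ℕ → α → β} {g : α → β} (hf : UniformIntegrable f 1 μ)
    (hfg : ∀ᵐ x ∂μ, Tendsto (fun n => f n x) atTop (𝓝 (g x))) :
    Tendsto (fun n => ∫ x, ‖f n x - g x‖ ∂μ) atTop (𝓝 0) := by
  have hg : MemLp g 1 μ := hf.memLp_of_ae_tendsto hfg
  have hLp : Tendsto (fun n => eLpNorm (f n - g) 1 μ) atTop (𝓝 0) :=
    tendsto_Lp_finite_of_tendsto_ae le_rfl ENNReal.one_ne_top hf.1 hg hf.2.1 hfg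
  simp_rw [fun n => integral_norm_sub_eq_toReal_eLpNorm ((hf.1 n).sub hg.1)]
  exact (ENNReal.tendsto_toReal ENNReal.zero_ne_top).comp hLp

theorem tendsto_integral_norm_sub_of_le_indicator [IsFiniteMeasure μ]
    {f h : ℕ → α → β} {g : α → β} {s : ℕ → Set α} {M : ℝ}
    (hfg : ∀ n, Integrable (f n - g) μ)
    (hhf : ∀ n x, ‖h n x - f n x‖ ≤ (s n).indicator (fun _ => M) x)
    (hs : Tendsto (fun n => μ (s n)) atTop (𝓝 0))
    (hlim : Tendsto (fun n => ∫ x, ‖f n x - g x‖ ∂μ) atTop (𝓝 0)) :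
    Tendsto (fun n => ∫ x, ‖h n x - g x‖ ∂μ) atTop (𝓝 0) := by
  set t := fun n => toMeasurable μ (s n)
  have ht (n : ℕ) : MeasurableSet (t n) := measurableSet_toMeasurable μ (s n)
  have hfg_norm (n : ℕ) : Integrable (fun x => ‖f n x - g x‖) μ := (hfg n).norm
  set bound := fun n x => (t n).indicator (fun _ => max M 0) x + ‖f n x - g x‖
  have hbound_int (n : ℕ) : Integrable (bound n) μ :=
    ((integrable_const _).indicator (ht n)).add (hfg_norm n)
  have hle (n : ℕ) (x : α) : ‖h n x - g x‖ ≤ bound n x := by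
    calc ‖h n x - g x‖ ≤ ‖h n x - f n x‖ + ‖f n x - g x‖ := norm_sub_le_norm_sub_add_norm_sub _ _ _
      _ ≤ bound n x := by
        simp only [bound]
        gcongr
        refine (hhf n x).trans ?_
        calc (s n).indicator (fun _ => M) x ≤ (s n).indicator (fun _ => max M 0) x :=
              Set.indicator_le_indicator (le_max_left M 0)
          _ ≤ (t n).indicator (fun _ => max M 0) x :=
              Set.indicator_le_indicator_of_subset (subset_toMeasurable μ (s n))
                (fun _ => le_max_right M 0) x
  have hbound (n : ℕ) :
      ∫ x, bound n x ∂μ = (μ (s n)).toReal * max M 0 + ∫ x, ‖f n x - g x‖ ∂μ := by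
    rw [integral_add ((integrable_const _).indicator (ht n)) (hfg_norm n),
      integral_indicator_const _ (ht n), measureReal_def, measure_toMeasurable, smul_eq_mul]
  have hbound_lim : Tendsto (fun n => ∫ x, bound n x ∂μ) atTop (𝓝 0) := by
    simp_rw [hbound]
    simpa using (((ENNReal.tendsto_toReal ENNReal.zero_ne_top).comp hs).mul_const _).add hlim
  exact squeeze_zero (fun n => integral_nonneg fun x => norm_nonneg _)
    (fun n => integral_mono_of_nonneg (.of_forall fun x => norm_nonneg _) (hbound_int n)
      (.of_forall (hle n))) hbound_lim

end MeasureTheory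

theorem stmt19_general {Q : Type*} [MeasurableSpace Q] (μ : Measure Q) [IsFiniteMeasure μ]
    (f : ℝ → ℝ) (fn : ℕ → ℝ → ℝ) (εn : ℕ → ℝ) (M : ℝ)
    (θn : ℕ → Q → ℝ) (θ : Q → ℝ)
    (hf : Continuous f)
    (hfn : ∀ n s, |fn n s - f s| ≤ if s < εn n then M else 0)
    (hae : ∀ᵐ x ∂μ, Tendsto (fun n => θn n x) atTop (nhds (θ x)))
    (hbad : Tendsto (fun n => μ {x | θn n x < εn n}) atTop (nhds 0))
    (hui : UniformIntegrable (fun n x => f (θn n x)) 1 μ) :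
    Tendsto (fun n => ∫ x, |fn n (θn n x) - f (θ x)| ∂μ) atTop (nhds 0) := by
  have hlim : ∀ᵐ x ∂μ, Tendsto (fun n => f (θn n x)) atTop (𝓝 (f (θ x))) := by
    filter_upwards [hae] with x hx
    exact (hf.tendsto (θ x)).comp hx
  have hint : ∀ n, Integrable (fun x => f (θn n x) - f (θ x)) μ := fun n =>
    (memLp_one_iff_integrable.mp (hui.memLp n)).sub (hui.integrable_of_ae_tendsto hlim)
  have hreg (n : ℕ) (x : Q) : ‖fn n (θn n x) - f (θn n x)‖ ≤
      {x | θn n x < εn n}.indicator (fun _ => M) x := by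
    simpa [Set.indicator_apply] using hfn n (θn n x)
  simpa only [Real.norm_eq_abs] using tendsto_integral_norm_sub_of_le_indicator hint hreg hbad
    (hui.tendsto_integral_norm_sub_of_ae_tendsto hlim)

/-- If `fₙ` agrees with a continuous `f` above a cut-off `εₙ → 0` with a
uniformly bounded discrepancy, `θₙ → θ` a.e., the measure of `{θₙ < εₙ}`
tends to zero, `f` is bounded on bounded sets and the family `f(θₙ)` is
uniformly integrable, then `∫ |fₙ(θₙ) - f(θ)| → 0`. -/
theorem stmt19 {Q : Type*} [MeasurableSpace Q] (μ : Measure Q) [IsFiniteMeasure μ]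
    (f : ℝ → ℝ) (fn : ℕ → ℝ → ℝ) (εn : ℕ → ℝ) (M : ℝ)
    (θn : ℕ → Q → ℝ) (θ : Q → ℝ)
    (hθn : ∀ n x, 0 ≤ θn n x) (hθ : ∀ x, 0 ≤ θ x)
    (hθnmeas : ∀ n, Measurable (θn n)) (hθmeas : Measurable θ)
    (hf : Continuous f)
    (hfb : ∀ R : ℝ, ∃ B : ℝ, ∀ s : ℝ, |s| ≤ R → |f s| ≤ B)
    (hfn : ∀ n s, |fn n s - f s| ≤ if s < εn n then M else 0)
    (hεn : Tendsto εn atTop (nhds 0))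
    (hae : ∀ᵐ x ∂μ, Tendsto (fun n => θn n x) atTop (nhds (θ x)))
    (hbad : Tendsto (fun n => μ {x | θn n x < εn n}) atTop (nhds 0))
    (hui : UniformIntegrable (fun n x => f (θn n x)) 1 μ) :
    Tendsto (fun n => ∫ x, |fn n (θn n x) - f (θ x)| ∂μ) atTop (nhds 0) :=
  stmt19_general μ f fn εn M θn θ hf hfn hae hbad hui
end
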